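/- Let $V$ be a finite-dimensional real vector space and $\mathcal{C} \subseteq V$ a convex cone. Let $L \subseteq V$ be a linear subspace and $R = \mathbb{R}_{\geq 0} v$ a ray with $v \notin L$. Suppose $R' \subseteq V$ is an extremal ray of $\mathcal{C}$ (a one-dimensional face) with $\mathcal{C} \subseteq (L \cap \mathcal{C}) + R$, and suppose there is a linear functional $e \in V^*$ with $L \subseteq \ker(e)$, $e(v) < 0$, and $e < 0$ on $R' \setminus \{0\}$. Then $R' = R$. -/

import Mathlib

variable {V : Type*} [AddCommGroup V] [Module ℝ V]

def posRay (v : V) : Set V := {w | ∃ t : ℝ, 0 ≤ t ∧ w = t • v}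

lemma smul_mem_posRay {t : ℝ} (ht : 0 ≤ t) (v : V) : t • v ∈ posRay v := ⟨t, ht, rfl⟩

lemma self_mem_posRay (v : V) : v ∈ posRay v := by
  simpa using smul_mem_posRay zero_le_one v

lemma posRay_smul {t : ℝ} (ht : 0 < t) (v : V) : posRay (t • v) = posRay v := by
  ext w
  constructor
  · rintro ⟨s, hs, rfl⟩
    exact ⟨s * t, mul_nonneg hs ht.le, smul_smul s t v⟩
  · rintro ⟨s, hs, rfl⟩
    refine ⟨s / t, div_nonneg hs ht.le, ?_⟩
    rw [smul_smul, div_mul_cancel₀ s ht.ne']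

lemma eq_zero_of_mem_posRay_of_map_eq_zero {e : V →ₗ[ℝ] ℝ} {v w : V} (hw : w ∈ posRay v)
    (hev : e v ≠ 0) (hew : e w = 0) : w = 0 := by
  obtain ⟨s, -, rfl⟩ := hw
  have hs : s = 0 := by simpa [hev] using hew
  simp [hs]

theorem stmt13_general (V : Type) [AddCommGroup V] [Module ℝ V]
    (C : Set V)
    (L : Submodule ℝ V) (v : V)
    (R : Set V) (hR : R = {w | ∃ t : ℝ, 0 ≤ t ∧ w = t • v}) (hRC : R ⊆ C)
    (R' : Set V) (hR'C : R' ⊆ C)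
    -- `R'` is a ray
    (hR'ray : ∃ v' : V, v' ≠ 0 ∧ R' = {w | ∃ t : ℝ, 0 ≤ t ∧ w = t • v'})
    -- `R'` is extremal in `𝒞`
    (hextremal : ∀ u w : V, u ∈ C → w ∈ C → u + w ∈ R' → u ∈ R' ∧ w ∈ R')
    -- `𝒞 ⊆ (L ∩ 𝒞) + R`
    (hsub : ∀ x ∈ C, ∃ l ∈ (L : Set V) ∩ C, ∃ r ∈ R, x = l + r)
    (e : V →ₗ[ℝ] ℝ)
    (hLker : ∀ l ∈ L, e l = 0)
    (hR'neg : ∀ w ∈ R', w ≠ 0 → e w < 0) :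
    R' = R := by
  obtain ⟨v', hv'0, rfl⟩ := hR'ray
  change posRay v' = R
  subst hR
  obtain ⟨l, ⟨hlL, hlC⟩, r, ⟨t, ht, rfl⟩, hdecomp⟩ := hsub v' (hR'C (self_mem_posRay v'))
  -- Extremality puts the `L`-component `l` on the ray `R'`, where `e` vanishes only at `0`.
  have hlR' : l ∈ posRay v' :=
    (hextremal l (t • v) hlC (hRC (smul_mem_posRay ht v)) (hdecomp ▸ self_mem_posRay v')).1
  have hl : l = 0 := eq_zero_of_mem_posRay_of_map_eq_zero hlR'
    (hR'neg v' (self_mem_posRay v') hv'0).ne (hLker l hlL)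
  rw [hl, zero_add] at hdecomp
  have htpos : 0 < t := ht.lt_of_ne (by rintro rfl; simp [hdecomp] at hv'0)
  rw [hdecomp]
  exact posRay_smul htpos v

/-- uniqueness of the extremal ray, Proposition 2.5(7).
Let `𝒞 ⊆ V` be a convex cone, `L ⊆ V` a linear subspace and `R = ℝ₊v` a ray
with `v ∉ L` and `R ⊆ 𝒞`. Let `R'` be an extremal ray of `𝒞` with
`𝒞 ⊆ (L ∩ 𝒞) + R`, and let `e ∈ V*` satisfy `e ≡ 0` on `L`, `e(v) < 0`, and
`e < 0` on `R' \ {0}`. Then `R' = R`. -/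
theorem stmt13 (V : Type) [AddCommGroup V] [Module ℝ V]
    (C : Set V) (hconv : Convex ℝ C)
    (hcone : ∀ (t : ℝ) (x : V), 0 ≤ t → x ∈ C → t • x ∈ C)
    (L : Submodule ℝ V) (v : V) (hv : v ∉ L)
    (R : Set V) (hR : R = {w | ∃ t : ℝ, 0 ≤ t ∧ w = t • v}) (hRC : R ⊆ C)
    (R' : Set V) (hR'C : R' ⊆ C)
    -- `R'` is a ray
    (hR'ray : ∃ v' : V, v' ≠ 0 ∧ R' = {w | ∃ t : ℝ, 0 ≤ t ∧ w = t • v'})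
    -- `R'` is extremal in `𝒞`
    (hextremal : ∀ u w : V, u ∈ C → w ∈ C → u + w ∈ R' → u ∈ R' ∧ w ∈ R')
    -- `𝒞 ⊆ (L ∩ 𝒞) + R`
    (hsub : ∀ x ∈ C, ∃ l ∈ (L : Set V) ∩ C, ∃ r ∈ R, x = l + r)
    (e : V →ₗ[ℝ] ℝ)
    (hLker : ∀ l ∈ L, e l = 0) (hev : e v < 0)
    (hR'neg : ∀ w ∈ R', w ≠ 0 → e w < 0) :
    R' = R :=
  stmt13_general V C L v R hR hRC R' hR'C hR'ray hextremal hsub e hLker hR'neg
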